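/- arXiv:2410.03968 — 3 statements merged into one kernel-verified Lean document; each statement's English description precedes it below -/
import Mathlib

section
/- Let f : (0,∞) → ℝ be non-decreasing and concave, p̂ ∈ Δ(V) with p̂_1 ≥ … ≥ p̂_d > 0, and p̂_d ≤ ε < p̂_1. Let î = max{i : p̂_i > ε}, assume g⁻(p̂_i) = f(p̂_i) − f(p̂_i − ε) > 0 for i ≤ î, set S_I = Σ_{i=1}^{I−1} (f(p̂_i) − f(p̂_I)) / g⁻(p̂_i), and let Î = max{I ≤ î : S_I ≤ 1}. Define q̃ with q̃_i proportional to 1/g⁻(p̂_i) for 1 ≤ i ≤ Î and q̃_i = 0 otherwise (normalized to sum to 1). Then q̃ solves the reduced regularized problem over the truncated support: for every q ∈ Δ(V) with q_i = 0 for all i > î, Σ_i q_i f(p̂_i) − max_{1 ≤ i ≤ î} q_i g⁻(p̂_i) ≤ Σ_i q̃_i f(p̂_i) − max_{1 ≤ i ≤ î} q̃_i g⁻(p̂_i). -/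
/-!
Write `F i = f (p̂_i)`, `g i = g⁻(p̂_i)`, `Z = ∑_{i ≤ Î} 1 / g i`, and let `t = max_{i ≤ î} q_i g_i`.
Since `F` is antitone and `q_i ≤ t / g_i`, for every level `J ≤ î` the objective of `q` is at most
`F_J + t (S_J - 1)`, while `q̃` has `max = 1 / Z` and objective `F_Î + (S_Î - 1) / Z`.
If `t ≥ 1 / Z`, take `J = Î` and use `S_Î ≤ 1`. If `t < 1 / Z`, then `Î < î` (otherwise
`1 = ∑ q_i ≤ t Z`), so `J = Î + 1` has `S_J > 1`; and `S_J = S_Î + (F_Î - F_J) Z` makes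
`F_J + (S_J - 1) / Z` equal to the objective of `q̃`.
-/

open Finset

def simplex (d : ℕ) : Set (Fin d → ℝ) := {p | (∀ i, 0 ≤ p i) ∧ ∑ i, p i = 1}

noncomputable section

namespace TruncatedStrategy

variable {ι : Type*} [Fintype ι] [LinearOrder ι]

/-- The paper's `S_I`. -/
def levelSum (F g : ι → ℝ) (I : ι) : ℝ :=
  ∑ i ∈ univ.filter (· < I), (F i - F I) / g i

def invSum (g : ι → ℝ) (I : ι) : ℝ :=
  ∑ k ∈ univ.filter (· ≤ I), 1 / g k

def truncWeights (g : ι → ℝ) (I : ι) (i : ι) : ℝ :=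
  if i ≤ I then (1 / g i) / invSum g I else 0

def regObjective (F g : ι → ℝ) (ihat : ι) (q : ι → ℝ) : ℝ :=
  (∑ i, q i * F i) - sSup {x : ℝ | ∃ i : ι, i ≤ ihat ∧ x = q i * g i}

lemma invSum_pos {g : ι → ℝ} {I ihat : ι} (hI : I ≤ ihat) (hg : ∀ i ≤ ihat, 0 < g i) :
    0 < invSum g I :=
  sum_pos (fun k hk => one_div_pos.mpr (hg k ((mem_filter.mp hk).2.trans hI))) ⟨I, by simp⟩

lemma le_sSup_weighted (g q : ι → ℝ) {ihat i : ι} (hi : i ≤ ihat) :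
    q i * g i ≤ sSup {x : ℝ | ∃ i : ι, i ≤ ihat ∧ x = q i * g i} := by
  refine le_csSup ((Set.finite_range fun i => q i * g i).subset ?_).bddAbove ⟨i, hi, rfl⟩
  rintro x ⟨j, -, rfl⟩
  exact ⟨j, rfl⟩

lemma sum_filter_le_eq_levelSum (F g : ι → ℝ) (I : ι) :
    ∑ i ∈ univ.filter (· ≤ I), (F i - F I) / g i = levelSum F g I := by
  have hfilter : univ.filter (· ≤ I) = insert I (univ.filter (· < I)) := by
    ext i
    simp [le_iff_lt_or_eq, or_comm]
  rw [hfilter, sum_insert (by simp), sub_self, zero_div, zero_add, levelSum]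

lemma levelSum_of_covBy (F g : ι → ℝ) {I J : ι} (hIJ : I ⋖ J) :
    levelSum F g J = levelSum F g I + (F I - F J) * invSum g I := by
  have hfilter : univ.filter (· < J) = univ.filter (· ≤ I) := by
    ext i
    simp [hIJ.lt_iff_le_left]
  rw [← sum_filter_le_eq_levelSum F g I, levelSum, hfilter, invSum, mul_sum, ← sum_add_distrib]
  refine sum_congr rfl fun i _ => ?_
  ring

lemma sum_mul_le_add_mul_levelSum {F g q : ι → ℝ} (hF : Antitone F) (hq0 : ∀ i, 0 ≤ q i)
    (hq1 : ∑ i, q i = 1) {J : ι} {t : ℝ} (hg : ∀ i < J, 0 < g i)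
    (ht : ∀ i < J, q i * g i ≤ t) :
    ∑ i, q i * F i ≤ F J + t * levelSum F g J := by
  have hshift : ∑ i, q i * F i = F J + ∑ i, q i * (F i - F J) := by
    simp only [mul_sub, sum_sub_distrib, ← sum_mul, hq1]
    ring
  have hterm : ∀ i, q i * (F i - F J) ≤ if i < J then t * ((F i - F J) / g i) else 0 := by
    intro i
    split_ifs with hiJ
    · rw [mul_div_assoc', le_div_iff₀ (hg i hiJ), mul_right_comm]
      exact mul_le_mul_of_nonneg_right (ht i hiJ) (sub_nonneg.mpr (hF hiJ.le))
    · exact mul_nonpos_of_nonneg_of_nonpos (hq0 i) (sub_nonpos.mpr (hF (not_lt.mp hiJ)))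
  rw [hshift, levelSum, mul_sum, sum_filter]
  exact add_le_add_right (sum_le_sum fun i _ => hterm i) _

lemma one_le_mul_invSum {g q : ι → ℝ} {ihat : ι} {t : ℝ} (hg : ∀ i ≤ ihat, 0 < g i)
    (hq1 : ∑ i, q i = 1) (hsupp : ∀ i, ihat < i → q i = 0)
    (ht : ∀ i ≤ ihat, q i * g i ≤ t) :
    1 ≤ t * invSum g ihat := by
  calc (1 : ℝ) = ∑ i ∈ univ.filter (· ≤ ihat), q i := by
        rw [← hq1, sum_filter]
        refine sum_congr rfl fun i _ => ?_
        split_ifs with hi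
        · rfl
        · exact hsupp i (not_le.mp hi)
    _ ≤ ∑ i ∈ univ.filter (· ≤ ihat), t * (1 / g i) := by
        refine sum_le_sum fun i hi => ?_
        have hi : i ≤ ihat := (mem_filter.mp hi).2
        rw [mul_one_div, le_div_iff₀ (hg i hi)]
        exact ht i hi
    _ = t * invSum g ihat := by rw [invSum, mul_sum]

lemma sum_truncWeights_mul (F g : ι → ℝ) (I : ι) (hZ : invSum g I ≠ 0) :
    ∑ i, truncWeights g I i * F i = F I + levelSum F g I / invSum g I := by
  have hsplit : ∀ i, 1 / g i / invSum g I * F i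
      = (F i - F I) / g i / invSum g I + F I * (1 / g i) / invSum g I := by
    intro i
    ring
  simp only [truncWeights, ite_mul, zero_mul, ← sum_filter, hsplit, sum_add_distrib, ← sum_div,
    ← mul_sum, sum_filter_le_eq_levelSum]
  rw [← invSum, mul_div_cancel_right₀ _ hZ, add_comm]

lemma sSup_truncWeights_mul {g : ι → ℝ} {I ihat : ι} (hI : I ≤ ihat)
    (hg : ∀ i ≤ ihat, 0 < g i) :
    sSup {x : ℝ | ∃ i : ι, i ≤ ihat ∧ x = truncWeights g I i * g i} = 1 / invSum g I := by
  have hval : ∀ i ≤ I, truncWeights g I i * g i = 1 / invSum g I := fun i hi => by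
    have hgi := (hg i (hi.trans hI)).ne'
    rw [truncWeights, if_pos hi]
    field_simp
  refine IsGreatest.csSup_eq ⟨⟨I, hI, (hval I le_rfl).symm⟩, ?_⟩
  rintro x ⟨i, -, rfl⟩
  by_cases hi : i ≤ I
  · exact (hval i hi).le
  · rw [truncWeights, if_neg hi, zero_mul]
    exact (one_div_pos.mpr (invSum_pos hI hg)).le

theorem regObjective_le_truncWeights {F g : ι → ℝ} (hF : Antitone F) {ihat Ihat : ι}
    (hg : ∀ i ≤ ihat, 0 < g i) (hIhat : Ihat ≤ ihat) (hS : levelSum F g Ihat ≤ 1)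
    (hS_max : ∀ I ≤ ihat, levelSum F g I ≤ 1 → I ≤ Ihat)
    {q : ι → ℝ} (hq0 : ∀ i, 0 ≤ q i) (hq1 : ∑ i, q i = 1) (hsupp : ∀ i, ihat < i → q i = 0) :
    regObjective F g ihat q ≤ regObjective F g ihat (truncWeights g Ihat) := by
  set Z := invSum g Ihat with hZ_def
  have hZ : 0 < Z := invSum_pos hIhat hg
  set t := sSup {x : ℝ | ∃ i : ι, i ≤ ihat ∧ x = q i * g i}
  have ht : ∀ i ≤ ihat, q i * g i ≤ t := fun i hi => le_sSup_weighted g q hi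
  have hbound : ∀ J ≤ ihat, ∑ i, q i * F i - t ≤ F J + t * (levelSum F g J - 1) :=
    fun J hJ => by
      have := sum_mul_le_add_mul_levelSum hF hq0 hq1 (fun i hi => hg i (hi.le.trans hJ))
        (fun i hi => ht i (hi.le.trans hJ))
      linarith
  rw [regObjective, regObjective, sSup_truncWeights_mul hIhat hg,
    sum_truncWeights_mul F g Ihat hZ.ne']
  have hvalue : F Ihat + levelSum F g Ihat / Z - 1 / Z = F Ihat + 1 / Z * (levelSum F g Ihat - 1) := by
    ring
  rcases le_or_gt (1 / Z) t with hZt | htZ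
  · calc _ ≤ F Ihat + t * (levelSum F g Ihat - 1) := hbound Ihat hIhat
      _ ≤ F Ihat + 1 / Z * (levelSum F g Ihat - 1) :=
        add_le_add_right (mul_le_mul_of_nonpos_right hZt (by linarith)) _
      _ = _ := hvalue.symm
  · rcases hIhat.lt_or_eq with hlt | rfl
    · obtain ⟨J, hIJ, hJ⟩ := exists_covBy_le_of_lt hlt
      have hSJ : 1 < levelSum F g J := by
        by_contra! h
        exact hIJ.lt.not_ge (hS_max J hJ h)
      calc _ ≤ F J + t * (levelSum F g J - 1) := hbound J hJ
        _ ≤ F J + 1 / Z * (levelSum F g J - 1) :=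
          add_le_add_right (mul_le_mul_of_nonneg_right htZ.le (by linarith)) _
        _ = _ := by
          rw [levelSum_of_covBy F g hIJ, ← hZ_def]
          field_simp
          ring
    · have := one_le_mul_invSum hg hq1 hsupp ht
      have := (lt_div_iff₀ hZ).mp htZ
      linarith

end TruncatedStrategy

end

open TruncatedStrategy in
/-- over strategies supported in `{1,…,î}`, the truncated strategy `q̃`
(proportional to `1/g⁻(p̂_i)` up to `Î`) solves the reduced regularized problem. -/
theorem stmt15 {d : ℕ} (f : ℝ → ℝ)
    (hmono : MonotoneOn f (Set.Ioi 0))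
    (phat : Fin d → ℝ)
    (hpos : ∀ i, 0 < phat i)
    (hsort : ∀ i j : Fin d, i ≤ j → phat j ≤ phat i)
    (ε : ℝ)
    (ihat : Fin d)
    (hgap : ∀ i : Fin d, i ≤ ihat → 0 < f (phat i) - f (phat i - ε))
    (Ihat : Fin d)
    (hIhat_le : Ihat ≤ ihat)
    (hIhat_cond : (∑ i ∈ univ.filter (· < Ihat),
        (f (phat i) - f (phat Ihat)) / (f (phat i) - f (phat i - ε))) ≤ 1)
    (hIhat_max : ∀ I : Fin d, I ≤ ihat →
        (∑ i ∈ univ.filter (· < I),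
          (f (phat i) - f (phat I)) / (f (phat i) - f (phat i - ε))) ≤ 1 →
        I ≤ Ihat)
    (qt : Fin d → ℝ)
    (hqt : ∀ i : Fin d,
        qt i = if i ≤ Ihat then
            (1 / (f (phat i) - f (phat i - ε)))
              / ∑ k ∈ univ.filter (· ≤ Ihat), 1 / (f (phat k) - f (phat k - ε))
          else 0) :
    ∀ q ∈ simplex d, (∀ i : Fin d, ihat < i → q i = 0) →
      (∑ i, q i * f (phat i))
          - sSup {x : ℝ | ∃ i : Fin d, i ≤ ihat ∧ x = q i * (f (phat i) - f (phat i - ε))}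
        ≤ (∑ i, qt i * f (phat i))
            - sSup {x : ℝ | ∃ i : Fin d, i ≤ ihat ∧
                x = qt i * (f (phat i) - f (phat i - ε))} := by
  intro q hq hsupp
  have hF : Antitone fun i => f (phat i) := fun i j hij =>
    hmono (hpos j) (hpos i) (hsort i j hij)
  obtain rfl : qt = truncWeights (fun i => f (phat i) - f (phat i - ε)) Ihat := funext hqt
  exact regObjective_le_truncWeights hF hgap hIhat_le hIhat_cond hIhat_max hq.1 hq.2 hsupp
end

section
/- Let f : (0,∞) → ℝ be non-decreasing and concave, p̂ ∈ Δ(V) with p̂_1 ≥ … ≥ p̂_d > 0, and 0 < ε < p̂_d with Σ_{i=1}^{d−1} (f(p̂_i) − f(p̂_d + ε)) / g⁻(p̂_i) ≥ 1, where g⁻(x) = f(x) − f(x − ε) > 0 is assumed for all p̂_i, and g⁺(x) = f(x + ε) − f(x). Set S_I = Σ_{i=1}^{I−1} (f(p̂_i) − f(p̂_I)) / g⁻(p̂_i) and Î = max{I : S_I ≤ 1}. Define q̃ with q̃_i proportional to 1/g⁻(p̂_i) for 1 ≤ i ≤ Î and q̃_i = 0 otherwise (normalized to sum to 1). Then q̃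 maximizes the regularized objective: for every q ∈ Δ(V), Σ_i q_i f(p̂_i) − max_{i ≠ j} { q_i g⁻(p̂_i) − q_j g⁺(p̂_j) } ≤ Σ_i q̃_i f(p̂_i) − max_{i ≠ j} { q̃_i g⁻(p̂_i) − q̃_j g⁺(p̂_j) }. -/
/-!
Write `v i = f (p̂ i)`, `a i = g⁻(p̂ i)` and `b i = g⁺(p̂ i)`. The truncated strategy `q̃`
equalises `q̃ i * a i = 1 / Z` on `T = {i ≤ Î}`, so its penalty is `1 / Z` and its value is the
water level `ν` solving `∑ i ∈ T, (v i - ν) / a i = 1`. The choice of `Î` makes `T` exactly the set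
where `v i ≥ ν`, so `∑ i, (v i - ν)⁺ / a i = 1`, and the budget condition then forces
`f (p̂_d + ε) ≤ ν`. The weights `μ i = (v i - ν)⁺ / a i` are a dual certificate: averaging the gaps
`q i * a i - q_d * b_d` with them bounds the penalty of any `q` from below, and shows that its
objective is at most `ν`.
-/

open Finset

noncomputable section Duality

variable {ι : Type*}

def pairGaps (q a b : ι → ℝ) : Set ℝ :=
  {x | ∃ i j, i ≠ j ∧ x = q i * a i - q j * b j}

def regObjective [Fintype ι] (v a b q : ι → ℝ) : ℝ :=
  ∑ i, q i * v i - sSup (pairGaps q a b)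

def excessMass [Fintype ι] (a v : ι → ℝ) (r : ℝ) : ℝ :=
  ∑ i, max (v i - r) 0 / a i

theorem bddAbove_pairGaps [Finite ι] (q a b : ι → ℝ) : BddAbove (pairGaps q a b) :=
  ((Set.finite_range fun p : ι × ι => q p.1 * a p.1 - q p.2 * b p.2).subset
    (by rintro x ⟨i, j, -, rfl⟩; exact ⟨(i, j), rfl⟩)).bddAbove

theorem sSup_pairGaps_eq [Finite ι] {q a b : ι → ℝ} {c : ℝ} (hle : ∀ i, q i * a i ≤ c)
    (hb : ∀ j, 0 ≤ q j * b j) {i j : ι} (hij : i ≠ j) (hi : q i * a i = c)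
    (hj : q j * b j = 0) : sSup (pairGaps q a b) = c :=
  IsGreatest.csSup_eq ⟨⟨i, j, hij, by rw [hi, hj, sub_zero]⟩, by
    rintro x ⟨k, l, -, rfl⟩; linarith [hle k, hb l]⟩

theorem regObjective_le_of_excessMass_eq_one [Fintype ι] {v a b q : ι → ℝ} {ν : ℝ} {j : ι}
    (hq0 : ∀ i, 0 ≤ q i) (hq1 : ∑ i, q i = 1) (ha : ∀ i, 0 < a i) (hbj : 0 ≤ b j)
    (hν : excessMass a v ν = 1) (hj : v j + b j ≤ ν) : regObjective v a b q ≤ ν := by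
  set μ : ι → ℝ := fun k => max (v k - ν) 0 / a k
  have hμ1 : ∑ k, μ k = 1 := hν
  have hμj : μ j = 0 := by simp [μ, show v j - ν ≤ 0 by linarith]
  have hμa : ∀ k, v k - μ k * a k = min (v k) ν := fun k => by
    simp only [μ, div_mul_cancel₀ _ (ha k).ne']
    rcases le_total (v k) ν with h | h
    · simp [h, sub_nonpos.2 h]
    · simp [h, sub_nonneg.2 h]
  have hlow : ∑ k, μ k * (q k * a k) - q j * b j ≤ sSup (pairGaps q a b) :=
    calc ∑ k, μ k * (q k * a k) - q j * b j = ∑ k, μ k * (q k * a k - q j * b j) := by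
          simp only [mul_sub, sum_sub_distrib, ← sum_mul]
          rw [hμ1, one_mul]
      _ ≤ ∑ k, μ k * sSup (pairGaps q a b) := by
          refine sum_le_sum fun k _ => ?_
          rcases eq_or_ne k j with rfl | hk
          · simp [hμj]
          · exact mul_le_mul_of_nonneg_left (le_csSup (bddAbove_pairGaps q a b) ⟨k, j, hk, rfl⟩)
              (div_nonneg (le_max_right _ _) (ha k).le)
      _ = sSup (pairGaps q a b) := by rw [← sum_mul, hμ1, one_mul]
  have hslack : q j * (ν - v j) ≤ ∑ k, q k * (ν - min (v k) ν) := by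
    simpa [min_eq_left (show v j ≤ ν by linarith)] using
      single_le_sum (f := fun k => q k * (ν - min (v k) ν))
        (fun k _ => mul_nonneg (hq0 k) (sub_nonneg.2 (min_le_right _ _))) (mem_univ j)
  have hsplit : ∑ k, q k * (ν - min (v k) ν) = ν - ∑ k, q k * min (v k) ν := by
    simp only [mul_sub, sum_sub_distrib, ← sum_mul, hq1, one_mul]
  have hvalue : ∑ k, q k * v k - ∑ k, μ k * (q k * a k) = ∑ k, q k * min (v k) ν := by
    rw [← sum_sub_distrib]
    exact sum_congr rfl fun k _ => by rw [← hμa]; ring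
  have hbq : q j * b j ≤ q j * (ν - v j) := mul_le_mul_of_nonneg_left (by linarith) (hq0 j)
  unfold regObjective
  linarith

theorem excessMass_eq_sum [Fintype ι] {a v : ι → ℝ} {r : ℝ} {s : Finset ι}
    (hs : ∀ k ∈ s, r ≤ v k) (hsc : ∀ k ∉ s, v k ≤ r) :
    excessMass a v r = ∑ k ∈ s, (v k - r) / a k := by
  rw [excessMass, ← sum_subset (subset_univ s) fun k _ hk => by
    rw [max_eq_right (sub_nonpos.2 (hsc k hk)), zero_div]]
  exact sum_congr rfl fun k hk => by rw [max_eq_left (sub_nonneg.2 (hs k hk))]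

theorem sum_sub_div_le_excessMass [Fintype ι] {a v : ι → ℝ} (ha : ∀ i, 0 ≤ a i) (s : Finset ι)
    (r : ℝ) : ∑ k ∈ s, (v k - r) / a k ≤ excessMass a v r :=
  calc ∑ k ∈ s, (v k - r) / a k ≤ ∑ k ∈ s, max (v k - r) 0 / a k :=
        sum_le_sum fun k _ => div_le_div_of_nonneg_right (le_max_left _ _) (ha k)
    _ ≤ excessMass a v r := sum_le_sum_of_subset_of_nonneg (subset_univ s) fun k _ _ =>
        div_nonneg (le_max_right _ _) (ha k)

theorem le_of_excessMass_le [Fintype ι] {a v : ι → ℝ} {r ν : ℝ} (ha : ∀ i, 0 < a i)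
    (hpos : 0 < excessMass a v ν) (h : excessMass a v ν ≤ excessMass a v r) : r ≤ ν := by
  by_contra! hr
  obtain ⟨i, -, hi⟩ := exists_ne_zero_of_sum_ne_zero hpos.ne'
  have hνi : ν < v i := by
    by_contra! h'
    simp [max_eq_right (sub_nonpos.2 h')] at hi
  refine h.not_gt (sum_lt_sum (fun k _ => ?_) ⟨i, mem_univ i, ?_⟩)
  · exact div_le_div_of_nonneg_right (max_le_max_right 0 (by linarith)) (ha k).le
  · rw [max_eq_left (sub_nonneg.2 hνi.le)]
    exact div_lt_div_of_pos_right (max_lt (by linarith) (sub_pos.2 hνi)) (ha i)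

end Duality

noncomputable section WaterLevel

variable {ι : Type*} (s : Finset ι) (a v : ι → ℝ)

def waterLevel : ℝ :=
  (∑ k ∈ s, v k / a k - 1) / ∑ k ∈ s, 1 / a k

variable {s a v}

theorem sum_sub_div_eq (hZ : ∑ k ∈ s, 1 / a k ≠ 0) (r : ℝ) :
    ∑ k ∈ s, (v k - r) / a k = 1 + (waterLevel s a v - r) * ∑ k ∈ s, 1 / a k := by
  rw [sub_mul, waterLevel, div_mul_cancel₀ _ hZ, mul_sum]
  simp only [sub_div, sum_sub_distrib]
  rw [sum_congr rfl fun k _ => (mul_one_div r (a k)).symm]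
  ring

theorem sum_sub_waterLevel_div (hZ : ∑ k ∈ s, 1 / a k ≠ 0) :
    ∑ k ∈ s, (v k - waterLevel s a v) / a k = 1 := by
  simp [sum_sub_div_eq hZ]

theorem waterLevel_le_iff (hZ : 0 < ∑ k ∈ s, 1 / a k) {r : ℝ} :
    waterLevel s a v ≤ r ↔ ∑ k ∈ s, (v k - r) / a k ≤ 1 := by
  rw [sum_sub_div_eq hZ.ne']
  constructor <;> intro h <;> nlinarith

variable [DecidableEq ι] (s a)

def truncInv (i : ι) : ℝ :=
  if i ∈ s then 1 / a i / ∑ k ∈ s, 1 / a k else 0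

theorem sum_truncInv_mul_sub [Fintype ι] (v : ι → ℝ) :
    ∑ i, truncInv s a i * v i - 1 / ∑ k ∈ s, 1 / a k = waterLevel s a v := by
  rw [waterLevel, sub_div, sum_div, ← sum_subset (subset_univ s) fun k _ hk => by
    simp [truncInv, hk]]
  congr 1
  exact sum_congr rfl fun k hk => by simp only [truncInv, if_pos hk]; ring

variable {s a}

theorem truncInv_nonneg (ha : ∀ i, 0 ≤ a i) (i : ι) : 0 ≤ truncInv s a i := by
  unfold truncInv
  split_ifs
  · exact div_nonneg (one_div_nonneg.2 (ha i)) (sum_nonneg fun k _ => one_div_nonneg.2 (ha k))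
  · exact le_rfl

theorem truncInv_mul_self_of_mem {i : ι} (hi : i ∈ s) (hai : a i ≠ 0) :
    truncInv s a i * a i = 1 / ∑ k ∈ s, 1 / a k := by
  rw [truncInv, if_pos hi]
  field_simp

theorem truncInv_mul_self_le (ha : ∀ i, 0 < a i) (i : ι) :
    truncInv s a i * a i ≤ 1 / ∑ k ∈ s, 1 / a k := by
  by_cases hi : i ∈ s
  · exact (truncInv_mul_self_of_mem hi (ha i).ne').le
  · rw [truncInv, if_neg hi, zero_mul]
    exact one_div_nonneg.2 (sum_nonneg fun k _ => one_div_nonneg.2 (ha k).le)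

theorem truncInv_of_notMem {i : ι} (hi : i ∉ s) : truncInv s a i = 0 := if_neg hi

end WaterLevel

section Sorted

variable {d : ℕ} {v a : Fin d → ℝ} {Ihat : Fin d}

theorem waterLevel_le_of_sum_le (hZ : 0 < ∑ k ∈ univ.filter (· ≤ Ihat), 1 / a k)
    (hcond : ∑ i ∈ univ.filter (· < Ihat), (v i - v Ihat) / a i ≤ 1) :
    waterLevel (univ.filter (· ≤ Ihat)) a v ≤ v Ihat := by
  rwa [waterLevel_le_iff hZ, ← sum_subset (s₁ := univ.filter (· < Ihat))]
  · exact fun k hk => by simp only [mem_filter, mem_univ, true_and] at hk ⊢; exact hk.le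
  · intro k hk hk'
    simp only [mem_filter, mem_univ, true_and, not_lt] at hk hk'
    rw [le_antisymm hk hk', sub_self, zero_div]

theorem lt_waterLevel_of_lt (hv : Antitone v) (hZ : 0 < ∑ k ∈ univ.filter (· ≤ Ihat), 1 / a k)
    (hmax : ∀ I, ∑ i ∈ univ.filter (· < I), (v i - v I) / a i ≤ 1 → I ≤ Ihat)
    {k : Fin d} (hk : Ihat < k) : v k < waterLevel (univ.filter (· ≤ Ihat)) a v := by
  rw [Fin.lt_def] at hk
  set I : Fin d := ⟨Ihat + 1, by omega⟩
  have hI : univ.filter (· < I) = univ.filter (· ≤ Ihat) := by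
    ext m
    simp only [mem_filter, mem_univ, true_and, Fin.lt_def, Fin.le_def, I]
    omega
  have hfail : ¬ waterLevel (univ.filter (· ≤ Ihat)) a v ≤ v I := by
    rw [waterLevel_le_iff hZ, ← hI]
    exact fun h => absurd (hmax I h) (by simp [Fin.le_def, I])
  exact (hv (show I ≤ k by simp [Fin.le_def, I]; omega)).trans_lt (not_le.1 hfail)

theorem regObjective_le_truncInv {b : Fin d → ℝ} (hv : Antitone v) (ha : ∀ i, 0 < a i)
    (hb : ∀ i, 0 ≤ b i) {j : Fin d}
    (hbudget : 1 ≤ ∑ i ∈ univ.filter (· < j), (v i - (v j + b j)) / a i)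
    (hcond : ∑ i ∈ univ.filter (· < Ihat), (v i - v Ihat) / a i ≤ 1)
    (hmax : ∀ I, ∑ i ∈ univ.filter (· < I), (v i - v I) / a i ≤ 1 → I ≤ Ihat)
    {q : Fin d → ℝ} (hq : q ∈ simplex d) :
    regObjective v a b q ≤ regObjective v a b (truncInv (univ.filter (· ≤ Ihat)) a) := by
  set T := univ.filter (· ≤ Ihat)
  have hZ : 0 < ∑ k ∈ T, 1 / a k := sum_pos (fun k _ => one_div_pos.2 (ha k)) ⟨Ihat, by simp [T]⟩
  set ν := waterLevel T a v
  have hνI : ν ≤ v Ihat := waterLevel_le_of_sum_le hZ hcond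
  have hmass : excessMass a v ν = 1 := by
    rw [excessMass_eq_sum (s := T) (fun k hk => hνI.trans (hv (by simpa [T] using hk)))
      (fun k hk => (lt_waterLevel_of_lt hv hZ hmax (by simpa [T] using hk)).le)]
    exact sum_sub_waterLevel_div hZ.ne'
  have hj : v j + b j ≤ ν := le_of_excessMass_le ha (by rw [hmass]; exact one_pos)
    (hmass ▸ hbudget.trans (sum_sub_div_le_excessMass (fun i => (ha i).le) _ _))
  obtain ⟨i, hi⟩ : (univ.filter (· < j)).Nonempty :=
    nonempty_of_sum_ne_zero (f := fun i => (v i - (v j + b j)) / a i) (by linarith)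
  have hij : min i Ihat < j := min_le_left i Ihat |>.trans_lt (by simpa using hi)
  have hsup : sSup (pairGaps (truncInv T a) a b) = 1 / ∑ k ∈ T, 1 / a k := by
    refine sSup_pairGaps_eq (truncInv_mul_self_le ha) (fun k => mul_nonneg
      (truncInv_nonneg (fun i => (ha i).le) k) (hb k)) hij.ne
      (truncInv_mul_self_of_mem (by simp [T]) (ha _).ne') ?_
    by_cases hjT : j ∈ T
    · have hvj : v Ihat ≤ v j := hv (by simpa [T] using hjT)
      rw [le_antisymm (by linarith) (hb j), mul_zero]
    · rw [truncInv_of_notMem hjT, zero_mul]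
  calc regObjective v a b q ≤ ν :=
        regObjective_le_of_excessMass_eq_one hq.1 hq.2 ha (hb j) hmass hj
    _ = regObjective v a b (truncInv T a) := by rw [regObjective, hsup, sum_truncInv_mul_sub]

end Sorted

/-- in the small-budget case, the truncated strategy `q̃`
(proportional to `1/g⁻(p̂_i)` up to `Î`) maximizes the regularized objective. -/
theorem stmt16 {d : ℕ} (hd : 2 ≤ d) (f : ℝ → ℝ)
    (hmono : MonotoneOn f (Set.Ioi 0))
    (phat : Fin d → ℝ)
    (hpos : ∀ i, 0 < phat i)
    (hsort : ∀ i j : Fin d, i ≤ j → phat j ≤ phat i)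
    (ε : ℝ) (hε : 0 < ε)
    (hgap : ∀ i : Fin d, 0 < f (phat i) - f (phat i - ε))
    (hbudget : 1 ≤ ∑ i ∈ univ.filter (· < (⟨d - 1, by omega⟩ : Fin d)),
        (f (phat i) - f (phat ⟨d - 1, by omega⟩ + ε)) / (f (phat i) - f (phat i - ε)))
    (Ihat : Fin d)
    (hIhat_cond : (∑ i ∈ univ.filter (· < Ihat),
        (f (phat i) - f (phat Ihat)) / (f (phat i) - f (phat i - ε))) ≤ 1)
    (hIhat_max : ∀ I : Fin d,
        (∑ i ∈ univ.filter (· < I),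
          (f (phat i) - f (phat I)) / (f (phat i) - f (phat i - ε))) ≤ 1 →
        I ≤ Ihat)
    (qt : Fin d → ℝ)
    (hqt : ∀ i : Fin d,
        qt i = if i ≤ Ihat then
            (1 / (f (phat i) - f (phat i - ε)))
              / ∑ k ∈ univ.filter (· ≤ Ihat), 1 / (f (phat k) - f (phat k - ε))
          else 0) :
    ∀ q ∈ simplex d,
      (∑ i, q i * f (phat i))
          - sSup {x : ℝ | ∃ i j : Fin d, i ≠ j ∧
              x = q i * (f (phat i) - f (phat i - ε))
                - q j * (f (phat j + ε) - f (phat j))}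
        ≤ (∑ i, qt i * f (phat i))
            - sSup {x : ℝ | ∃ i j : Fin d, i ≠ j ∧
                x = qt i * (f (phat i) - f (phat i - ε))
                  - qt j * (f (phat j + ε) - f (phat j))} := by
  intro q hq
  have hv : Antitone fun i => f (phat i) := fun i j hij => hmono (hpos j) (hpos i) (hsort i j hij)
  have hb : ∀ i, 0 ≤ f (phat i + ε) - f (phat i) := fun i =>
    sub_nonneg.2 (hmono (hpos i) (show (0 : ℝ) < phat i + ε by linarith [hpos i]) (by linarith))
  have hqt_eq : qt = truncInv (univ.filter (· ≤ Ihat)) fun i => f (phat i) - f (phat i - ε) :=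
    funext fun i => by simp [hqt, truncInv]
  subst hqt_eq
  exact regObjective_le_truncInv hv hgap hb (by simpa using hbudget) hIhat_cond hIhat_max hq
end

section
/- Fix ε > 0 and let D = {p̂ ∈ Δ(V) : ε < max_i p̂_i}. Then the value function of the one-step Decoding Game, M̄(p̂) = sup over q ∈ Δ(V) of inf over p ∈ N(p̂) of Σ_i q_i log p_i (values in the extended reals, log 0 = −∞), is real-valued and continuous on D. -/
/-!
Answering `p = p̂` gives `M̄(p̂) ≤ 0`, and betting everything on a coordinate with `p̂ᵢ > ε`
gives `M̄(p̂) ≥ log (p̂ᵢ - ε)`, so `M̄` is real on `D`.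

For continuity at `p̂`, a near-optimal strategy `q` can be taken with support in
`{j | ε + ρ ≤ p̂ⱼ}`, where `ρ` depends only on `η`, `d` and a lower bound `κ` for `p̂ᵢ - ε`:
on a coordinate with `p̂ⱼ < ε + ρ` the adversary can push `pⱼ` below `ρ`, so `q` puts mass at
most `M̄ / log ρ` there, and moving that mass to `i` costs little. Such a `q` guarantees almost
the same payoff at every `p̂'` near `p̂`, since each `p ∈ N(p̂')` can be mixed with `p̂` into a
point of `N(p̂)` whose log-likelihood under `q` is barely larger. This gives
`M̄(p̂) ≤ M̄(p̂') + η`, and the symmetric inequality holds as well.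
-/

open Finset

noncomputable def elog (x : ℝ) : EReal := if x ≤ 0 then ⊥ else ((Real.log x : ℝ) : EReal)

noncomputable def dTV {d : ℕ} (p q : Fin d → ℝ) : ℝ := (∑ i, |p i - q i|) / 2

def nbhd {d : ℕ} (phat : Fin d → ℝ) (ε : ℝ) : Set (Fin d → ℝ) :=
  {p | p ∈ simplex d ∧ dTV p phat ≤ ε}

noncomputable def obj {d : ℕ} (q p : Fin d → ℝ) : EReal :=
  ∑ i, ((q i : ℝ) : EReal) * elog (p i)

/-- Value function of the one-step Decoding Game. -/
noncomputable def Mbar {d : ℕ} (ε : ℝ) (phat : Fin d → ℝ) : EReal :=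
  ⨆ q ∈ simplex d, ⨅ p ∈ nbhd phat ε, obj q p

variable {d : ℕ}

lemma le_one_of_mem_simplex {p : Fin d → ℝ} (hp : p ∈ simplex d) (i : Fin d) : p i ≤ 1 := by
  simpa [hp.2] using single_le_sum (fun j _ => hp.1 j) (mem_univ i)

lemma dTV_nonneg (p q : Fin d → ℝ) : 0 ≤ dTV p q := by
  unfold dTV; positivity

lemma dTV_self (p : Fin d → ℝ) : dTV p p = 0 := by
  simp [dTV]

lemma dTV_comm (p q : Fin d → ℝ) : dTV p q = dTV q p := by
  simp only [dTV, abs_sub_comm]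

lemma dTV_triangle (p q r : Fin d → ℝ) : dTV p r ≤ dTV p q + dTV q r := by
  unfold dTV
  rw [← add_div, ← sum_add_distrib]
  gcongr with i
  exact abs_sub_le _ _ _

lemma continuous_dTV_left (q : Fin d → ℝ) : Continuous fun p => dTV p q := by
  unfold dTV; fun_prop

lemma sub_le_dTV {p c : Fin d → ℝ} (hp : p ∈ simplex d) (hc : c ∈ simplex d) (i : Fin d) :
    c i - p i ≤ dTV p c := by
  have hrest : c i - p i = ∑ j ∈ univ.erase i, (p j - c j) := by
    rw [sum_erase_eq_sub (mem_univ i), sum_sub_distrib, hp.2, hc.2]; ring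
  have hle : ∑ j ∈ univ.erase i, (p j - c j) ≤ ∑ j ∈ univ.erase i, |p j - c j| :=
    sum_le_sum fun j _ => le_abs_self _
  have hsplit := add_sum_erase univ (fun j => |p j - c j|) (mem_univ i)
  have hi := neg_abs_le (p i - c i)
  unfold dTV
  linarith

lemma EReal.coe_finset_sum {ι : Type*} (s : Finset ι) (f : ι → ℝ) :
    ((∑ i ∈ s, f i : ℝ) : EReal) = ∑ i ∈ s, (f i : EReal) :=
  map_sum (⟨⟨Real.toEReal, EReal.coe_zero⟩, EReal.coe_add⟩ : ℝ →+ EReal) f s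

lemma elog_of_pos {x : ℝ} (hx : 0 < x) : elog x = Real.log x := if_neg hx.not_ge

lemma elog_of_nonpos {x : ℝ} (hx : x ≤ 0) : elog x = ⊥ := if_pos hx

lemma elog_mono : Monotone elog := by
  intro x y hxy
  rcases le_or_gt x 0 with hx | hx
  · simp [elog_of_nonpos hx]
  · rw [elog_of_pos hx, elog_of_pos (hx.trans_le hxy)]
    exact EReal.coe_le_coe_iff.2 (Real.log_le_log hx hxy)

lemma elog_nonpos {x : ℝ} (hx : x ≤ 1) : elog x ≤ 0 := by
  rcases le_or_gt x 0 with h0 | h0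
  · simp [elog_of_nonpos h0]
  · rw [elog_of_pos h0]
    exact EReal.coe_nonpos.2 (Real.log_nonpos h0.le hx)

section obj

variable {q q' p : Fin d → ℝ}

lemma obj_add (hq : 0 ≤ q) (hq' : 0 ≤ q') : obj (q + q') p = obj q p + obj q' p := by
  simp only [obj, ← sum_add_distrib, Pi.add_apply, EReal.coe_add]
  exact sum_congr rfl fun i _ =>
    EReal.right_distrib_of_nonneg (EReal.coe_nonneg.2 (hq i)) (EReal.coe_nonneg.2 (hq' i))

lemma obj_nonpos (hq : 0 ≤ q) (hp : ∀ i, p i ≤ 1) : obj q p ≤ 0 :=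
  sum_nonpos fun i _ =>
    mul_nonpos_of_nonneg_of_nonpos (EReal.coe_nonneg.2 (hq i)) (elog_nonpos (hp i))

lemma obj_le_obj_of_le (hq' : 0 ≤ q') (hle : q' ≤ q) (hp : ∀ i, p i ≤ 1) :
    obj q p ≤ obj q' p := by
  have hsplit : q = q' + (q - q') := by abel
  rw [hsplit, obj_add hq' (sub_nonneg.2 hle)]
  simpa using add_le_add_right (obj_nonpos (sub_nonneg.2 hle) hp) (obj q' p)

lemma obj_single (i : Fin d) (μ : ℝ) (p : Fin d → ℝ) :
    obj (Pi.single i μ) p = μ * elog (p i) := by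
  rw [obj, sum_eq_single i (fun j _ hj => by simp [hj]) (by simp)]
  simp

lemma obj_le_mul_elog (hq : 0 ≤ q) (hp : ∀ i, p i ≤ 1) (j : Fin d) :
    obj q p ≤ q j * elog (p j) := by
  rw [← obj_single]
  refine obj_le_obj_of_le (Pi.single_nonneg.2 (hq j)) (fun i => ?_) hp
  rcases eq_or_ne i j with rfl | h
  · simp
  · simpa [h] using hq i

lemma obj_eq_coe_sum (h : ∀ i, q i ≠ 0 → 0 < p i) :
    obj q p = ((∑ i, q i * Real.log (p i) : ℝ) : EReal) := by
  rw [obj, EReal.coe_finset_sum]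
  refine sum_congr rfl fun i _ => ?_
  rcases eq_or_ne (q i) 0 with h0 | h0
  · simp [h0]
  · rw [elog_of_pos (h i h0), EReal.coe_mul]

end obj

section nbhd

variable {ε : ℝ} {c p : Fin d → ℝ}

lemma self_mem_nbhd (hc : c ∈ simplex d) (hε : 0 ≤ ε) : c ∈ nbhd c ε :=
  ⟨hc, (dTV_self c).trans_le hε⟩

lemma sub_le_of_mem_nbhd (hc : c ∈ simplex d) (hp : p ∈ nbhd c ε) (i : Fin d) :
    c i - ε ≤ p i := by
  linarith [sub_le_dTV hp.1 hc i, hp.2]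

lemma shift_mem_nbhd (hc : c ∈ simplex d) {i j : Fin d} (hij : i ≠ j) {s : ℝ} (hs : 0 ≤ s)
    (hsj : s ≤ c j) (hsε : s ≤ ε) : c + Pi.single i s - Pi.single j s ∈ nbhd c ε := by
  refine ⟨⟨fun k => ?_, ?_⟩, ?_⟩
  · rcases eq_or_ne k j with rfl | hk
    · simp only [Pi.sub_apply, Pi.add_apply, Pi.single_eq_of_ne' hij, add_zero,
        Pi.single_eq_same, sub_nonneg]
      exact hsj
    · simp only [Pi.sub_apply, Pi.add_apply, Pi.single_apply, hk, if_false]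
      have := hc.1 k
      split <;> linarith
  · simp [sum_add_distrib, sum_sub_distrib, hc.2]
  · have hsum : ∑ k, |(c + Pi.single i s - Pi.single j s : Fin d → ℝ) k - c k|
        = ∑ k, (Pi.single i s k + Pi.single j s k) := by
      refine sum_congr rfl fun k _ => ?_
      rcases eq_or_ne k i with rfl | hki
      · simp [hij, abs_of_nonneg hs]
      · rcases eq_or_ne k j with rfl | hkj
        · simp [hki, abs_of_nonneg hs]
        · simp [hki, hkj]
    rw [dTV, hsum, sum_add_distrib]
    simp only [sum_pi_single', mem_univ, if_true]
    linarith

lemma dTV_mix (p c : Fin d → ℝ) {t : ℝ} (ht : t ≤ 1) :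
    dTV (fun i => (1 - t) * p i + t * c i) c = (1 - t) * dTV p c := by
  simp only [dTV, mul_div_assoc', mul_sum]
  congr 1
  refine sum_congr rfl fun i _ => ?_
  rw [show (1 - t) * p i + t * c i - c i = (1 - t) * (p i - c i) by ring, abs_mul,
    abs_of_nonneg (by linarith)]

lemma mix_mem_nbhd (hp : p ∈ simplex d) (hc : c ∈ simplex d) {t : ℝ} (ht0 : 0 ≤ t) (ht1 : t ≤ 1)
    (hdist : (1 - t) * dTV p c ≤ ε) : (fun i => (1 - t) * p i + t * c i) ∈ nbhd c ε := by
  refine ⟨⟨fun i => ?_, ?_⟩, by rwa [dTV_mix p c ht1]⟩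
  · have := hp.1 i; have := hc.1 i; nlinarith
  · rw [sum_add_distrib, ← mul_sum, ← mul_sum, hp.2, hc.2]; ring

end nbhd

noncomputable def worstCase (ε : ℝ) (c q : Fin d → ℝ) : EReal := ⨅ p ∈ nbhd c ε, obj q p

lemma single_mem_simplex (i : Fin d) : (Pi.single i 1 : Fin d → ℝ) ∈ simplex d :=
  ⟨fun j => by rw [Pi.single_apply]; split <;> norm_num, by simp⟩

section value

variable {ε : ℝ} {c q : Fin d → ℝ}

lemma worstCase_le_Mbar (hq : q ∈ simplex d) : worstCase ε c q ≤ Mbar ε c :=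
  le_iSup₂ (f := fun q (_ : q ∈ simplex d) => worstCase ε c q) q hq

lemma worstCase_nonpos (hε : 0 ≤ ε) (hc : c ∈ simplex d) (hq : q ∈ simplex d) :
    worstCase ε c q ≤ 0 :=
  (iInf₂_le c (self_mem_nbhd hc hε)).trans (obj_nonpos hq.1 (le_one_of_mem_simplex hc))

lemma Mbar_nonpos (hε : 0 ≤ ε) (hc : c ∈ simplex d) : Mbar ε c ≤ 0 :=
  iSup₂_le fun _ hq => worstCase_nonpos hε hc hq

lemma log_sub_le_Mbar (hc : c ∈ simplex d) {i : Fin d} (hi : ε < c i) :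
    (Real.log (c i - ε) : EReal) ≤ Mbar ε c := by
  refine le_trans (le_iInf₂ fun p hp => ?_) (worstCase_le_Mbar (single_mem_simplex i))
  rw [obj_single, EReal.coe_one, one_mul, ← elog_of_pos (sub_pos.2 hi)]
  exact elog_mono (sub_le_of_mem_nbhd hc hp i)

lemma Mbar_eq_coe_toReal (hε : 0 ≤ ε) (hc : c ∈ simplex d) {i : Fin d} (hi : ε < c i) :
    Mbar ε c = (Mbar ε c).toReal :=
  (EReal.coe_toReal (ne_top_of_le_ne_top EReal.zero_ne_top (Mbar_nonpos hε hc))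
    (ne_bot_of_le_ne_bot (EReal.coe_ne_bot _) (log_sub_le_Mbar hc hi))).symm

end value

def moveMass (q : Fin d → ℝ) (B : Finset (Fin d)) (i : Fin d) : Fin d → ℝ :=
  (fun j => if j ∈ B then 0 else q j) + Pi.single i (∑ j ∈ B, q j)

section moveMass

variable {q p : Fin d → ℝ} {B : Finset (Fin d)} {i : Fin d}

lemma moveMass_nonneg (hq : 0 ≤ q) : 0 ≤ moveMass q B i :=
  add_nonneg (fun j => by dsimp only; split_ifs; exacts [le_rfl, hq j])
    (Pi.single_nonneg.2 (sum_nonneg fun j _ => hq j))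

lemma moveMass_mem_simplex (hq : q ∈ simplex d) : moveMass q B i ∈ simplex d := by
  refine ⟨moveMass_nonneg hq.1, ?_⟩
  have hsplit := sum_filter_add_sum_filter_not univ (· ∈ B) q
  simp only [moveMass, Pi.add_apply, sum_add_distrib, sum_pi_single', mem_univ, if_true,
    sum_ite, sum_const_zero, zero_add, filter_mem_eq_inter, univ_inter] at hsplit ⊢
  linarith [hq.2]

lemma moveMass_eq_zero {j : Fin d} (hjB : j ∈ B) (hji : j ≠ i) : moveMass q B i j = 0 := by
  simp [moveMass, hjB, hji]

lemma obj_add_le_obj_moveMass (hq : 0 ≤ q) (hp : ∀ j, p j ≤ 1) :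
    obj q p + (∑ j ∈ B, q j : ℝ) * elog (p i) ≤ obj (moveMass q B i) p := by
  have hkeep : 0 ≤ fun j => if j ∈ B then 0 else q j := fun j => by
    dsimp only; split_ifs; exacts [le_rfl, hq j]
  rw [moveMass, obj_add hkeep (Pi.single_nonneg.2 (sum_nonneg fun j _ => hq j)), obj_single]
  refine add_le_add_left (obj_le_obj_of_le hkeep (fun j => ?_) hp) _
  dsimp only; split_ifs; exacts [hq j, le_rfl]

end moveMass

section truncation

variable {ε : ℝ} {c q : Fin d → ℝ}

/-- Moving `min (c j) ε` of mass from `j` to `i` lets the adversary push `p j` below `ρ`. -/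
lemma le_mul_log_of_le_worstCase (hε : 0 ≤ ε) (hc : c ∈ simplex d) (hq : q ∈ simplex d)
    {i j : Fin d} (hij : i ≠ j) {ρ : ℝ} (hρ : 0 < ρ) (hcj : c j < ε + ρ) {m : ℝ}
    (hm : (m : EReal) ≤ worstCase ε c q) : m ≤ q j * Real.log ρ := by
  set p := c + Pi.single i (min (c j) ε) - Pi.single j (min (c j) ε)
  have hp : p ∈ nbhd c ε :=
    shift_mem_nbhd hc hij (le_min (hc.1 j) hε) (min_le_left _ _) (min_le_right _ _)
  have hpj : p j ≤ ρ := by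
    simp only [p, Pi.sub_apply, Pi.add_apply, Pi.single_eq_same, Pi.single_eq_of_ne hij.symm]
    rcases min_cases (c j) ε with ⟨h, -⟩ | ⟨h, -⟩ <;> rw [h] <;> linarith
  refine EReal.coe_le_coe_iff.1 ?_
  calc (m : EReal) ≤ q j * elog (p j) :=
        hm.trans ((iInf₂_le _ hp).trans (obj_le_mul_elog hq.1 (le_one_of_mem_simplex hp.1) j))
    _ ≤ q j * elog ρ := mul_le_mul_of_nonneg_left (elog_mono hpj) (EReal.coe_nonneg.2 (hq.1 j))
    _ = (q j * Real.log ρ : ℝ) := by rw [elog_of_pos hρ, EReal.coe_mul]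

lemma exists_supported_le_worstCase (hε : 0 ≤ ε) (hc : c ∈ simplex d) (hq : q ∈ simplex d)
    {i : Fin d} {κ ρ : ℝ} (hκ : 0 < κ) (hci : ε + κ ≤ c i) (hρ0 : 0 < ρ) (hρκ : ρ ≤ κ)
    (hρ1 : ρ < 1) {m : ℝ} (hm : (m : EReal) ≤ worstCase ε c q) :
    ∃ q' ∈ simplex d, (∀ j, q' j ≠ 0 → ε + ρ ≤ c j) ∧
      ((m + d * (m / Real.log ρ) * Real.log κ : ℝ) : EReal) ≤ worstCase ε c q' := by
  have hlogρ : Real.log ρ < 0 := Real.log_neg hρ0 hρ1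
  have hlogκ : Real.log κ ≤ 0 :=
    Real.log_nonpos hκ.le (by linarith [le_one_of_mem_simplex hc i])
  have hm0 : m ≤ 0 := EReal.coe_nonpos.1 (hm.trans (worstCase_nonpos hε hc hq))
  set B := univ.filter fun j => c j < ε + ρ
  have hiB : i ∉ B := by simp only [B, mem_filter, mem_univ, true_and, not_lt]; linarith
  have hmass : ∑ j ∈ B, q j ≤ d * (m / Real.log ρ) := by
    have hle : ∀ j ∈ B, q j ≤ m / Real.log ρ := fun j hj =>
      (le_div_iff_of_neg hlogρ).2 <| le_mul_log_of_le_worstCase hε hc hq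
        (ne_of_mem_of_not_mem hj hiB).symm hρ0 (mem_filter.1 hj).2 hm
    calc ∑ j ∈ B, q j ≤ B.card • (m / Real.log ρ) := sum_le_card_nsmul B q _ hle
      _ ≤ d * (m / Real.log ρ) := by
        rw [nsmul_eq_mul]
        gcongr
        · exact div_nonneg_of_nonpos hm0 hlogρ.le
        · simpa using card_le_univ B
  refine ⟨moveMass q B i, moveMass_mem_simplex hq, fun j hj => ?_, le_iInf₂ fun p hp => ?_⟩
  · by_contra hcj
    rcases eq_or_ne j i with rfl | hji
    · linarith
    · exact hj (moveMass_eq_zero (mem_filter.2 ⟨mem_univ j, not_le.1 hcj⟩) hji)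
  have hpi : κ ≤ p i := by linarith [sub_le_of_mem_nbhd hc hp i]
  have hloss : m + d * (m / Real.log ρ) * Real.log κ ≤ m + (∑ j ∈ B, q j) * Real.log κ := by
    linarith [mul_le_mul_of_nonpos_right hmass hlogκ]
  calc ((m + d * (m / Real.log ρ) * Real.log κ : ℝ) : EReal)
      ≤ (m : EReal) + ((∑ j ∈ B, q j) * Real.log κ : ℝ) := by
        rw [← EReal.coe_add]; exact EReal.coe_le_coe_iff.2 hloss
    _ ≤ obj q p + (∑ j ∈ B, q j : ℝ) * elog (p i) := by
        refine add_le_add (hm.trans (iInf₂_le p hp)) ?_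
        rw [elog_of_pos (hκ.trans_le hpi), ← EReal.coe_mul]
        exact EReal.coe_le_coe_iff.2 (mul_le_mul_of_nonneg_left (Real.log_le_log hκ hpi)
          (sum_nonneg fun j _ => hq.1 j))
    _ ≤ obj (moveMass q B i) p := obj_add_le_obj_moveMass hq.1 (le_one_of_mem_simplex hp.1)

end truncation

lemma exists_supported_near_optimal {ε : ℝ} (hε : 0 ≤ ε) {κ η : ℝ} (hκ : 0 < κ) (hη : 0 < η) :
    ∃ ρ > 0, ∀ c ∈ simplex d, ∀ i, ε + κ ≤ c i →
      ∃ q ∈ simplex d, (∀ j, q j ≠ 0 → ε + ρ ≤ c j) ∧ Mbar ε c ≤ worstCase ε c q + η := by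
  set K := -Real.log κ
  -- For `-K - η ≤ m ≤ 0`, `-log ρ ≥ L` makes the truncation loss `d * (m / log ρ) * log κ`
  -- at most `η / 2`.
  set L := 2 * d * K * (K + η) / η + 1
  set ρ := min (min κ (1 / 2)) (Real.exp (-L))
  have hρ0 : 0 < ρ := by positivity
  have hρκ : ρ ≤ κ := (min_le_left _ _).trans (min_le_left _ _)
  have hρ1 : ρ < 1 := ((min_le_left _ _).trans (min_le_right _ _)).trans_lt (by norm_num)
  have hlogρ : L ≤ -Real.log ρ := by
    have := Real.log_le_log hρ0 (min_le_right (min κ (1 / 2)) (Real.exp (-L)))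
    rw [Real.log_exp] at this
    linarith
  refine ⟨ρ, hρ0, fun c hc i hci => ?_⟩
  have hK : 0 ≤ K := neg_nonneg.2 <|
    Real.log_nonpos hκ.le (by linarith [le_one_of_mem_simplex hc i])
  have hL : 0 < L := by positivity
  set M := (Mbar ε c).toReal
  have hM : Mbar ε c = M := Mbar_eq_coe_toReal hε hc (show ε < c i by linarith)
  have hKM : -K ≤ M := by
    have := log_sub_le_Mbar hc (show ε < c i by linarith)
    rw [hM, EReal.coe_le_coe_iff] at this
    linarith [Real.log_le_log hκ (show κ ≤ c i - ε by linarith)]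
  obtain ⟨q₀, hq₀, hlt⟩ : ∃ q₀ ∈ simplex d, ((M - η / 2 : ℝ) : EReal) < worstCase ε c q₀ := by
    have : ((M - η / 2 : ℝ) : EReal) < Mbar ε c := by
      rw [hM]; exact EReal.coe_lt_coe_iff.2 (by linarith)
    simpa only [Mbar, worstCase, lt_iSup_iff, exists_prop] using this
  obtain ⟨q, hq, hsupp, hval⟩ :=
    exists_supported_le_worstCase hε hc hq₀ hκ hci hρ0 hρκ hρ1 hlt.le
  refine ⟨q, hq, hsupp, ?_⟩
  have hweight : (M - η / 2) / Real.log ρ ≤ (K + η) / L := by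
    rw [← neg_div_neg_eq]
    exact div_le_div₀ (by positivity) (by linarith) hL hlogρ
  have hloss : d * ((K + η) / L) * K ≤ η / 2 := by
    rw [mul_div_assoc', div_mul_eq_mul_div, div_le_iff₀ hL]
    simp only [L]
    field_simp
    linarith
  have hreal : M - η ≤ M - η / 2 + d * ((M - η / 2) / Real.log ρ) * Real.log κ := by
    nlinarith [mul_le_mul_of_nonneg_left hweight (Nat.cast_nonneg d : (0 : ℝ) ≤ d)]
  rw [hM, ← EReal.sub_le_iff_le_add (.inl (EReal.coe_ne_bot η)) (.inl (EReal.coe_ne_top η)),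
    ← EReal.coe_sub]
  exact (EReal.coe_le_coe_iff.2 hreal).trans hval

lemma log_add_le_log_add_div {x t : ℝ} (hx : 0 < x) (ht : 0 ≤ t) :
    Real.log (x + t) ≤ Real.log x + t / x := by
  have h := Real.log_le_sub_one_of_pos (show 0 < (x + t) / x by positivity)
  rw [Real.log_div (by positivity) hx.ne', add_div, div_self hx.ne'] at h
  linarith

section transfer

variable {ε : ℝ} {a b q : Fin d → ℝ}

lemma obj_mix_le {p : Fin d → ℝ} (hq : q ∈ simplex d) (ha : a ∈ simplex d) {t r : ℝ}
    (ht0 : 0 ≤ t) (ht1 : t < 1) (hr : 0 < r) (hp : ∀ i, q i ≠ 0 → r ≤ p i) :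
    obj q (fun i => (1 - t) * p i + t * a i) ≤ obj q p + (t / r : ℝ) := by
  have hpos : ∀ i, q i ≠ 0 → 0 < p i := fun i hi => hr.trans_le (hp i hi)
  have hmixpos : ∀ i, q i ≠ 0 → 0 < (1 - t) * p i + t * a i := fun i hi =>
    add_pos_of_pos_of_nonneg (mul_pos (by linarith) (hpos i hi)) (mul_nonneg ht0 (ha.1 i))
  rw [obj_eq_coe_sum hmixpos, obj_eq_coe_sum hpos, ← EReal.coe_add, EReal.coe_le_coe_iff]
  have hterm : ∀ i, q i * Real.log ((1 - t) * p i + t * a i)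
      ≤ q i * Real.log (p i) + q i * (t / r) := by
    intro i
    rcases eq_or_ne (q i) 0 with h | h
    · simp [h]
    rw [← mul_add]
    refine mul_le_mul_of_nonneg_left ?_ (hq.1 i)
    calc Real.log ((1 - t) * p i + t * a i) ≤ Real.log (p i + t) :=
          Real.log_le_log (hmixpos i h) (by nlinarith [le_one_of_mem_simplex ha i, hpos i h])
      _ ≤ Real.log (p i) + t / p i := log_add_le_log_add_div (hpos i h) ht0
      _ ≤ Real.log (p i) + t / r := by gcongr; exact hp i h
  calc ∑ i, q i * Real.log ((1 - t) * p i + t * a i)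
      ≤ ∑ i, (q i * Real.log (p i) + q i * (t / r)) := sum_le_sum fun i _ => hterm i
    _ = ∑ i, q i * Real.log (p i) + t / r := by rw [sum_add_distrib, ← sum_mul, hq.2, one_mul]

lemma worstCase_le_worstCase_add (hε : 0 < ε) (ha : a ∈ simplex d) (hb : b ∈ simplex d)
    (hq : q ∈ simplex d) {ρ δ : ℝ} (hδρ : δ < ρ) (hab : dTV a b ≤ δ)
    (hsupp : ∀ i, q i ≠ 0 → ε + ρ ≤ a i) :
    worstCase ε a q ≤ worstCase ε b q + (δ / (ε * (ρ - δ)) : ℝ) := by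
  have hδ : 0 ≤ δ := (dTV_nonneg a b).trans hab
  set t := δ / (ε + δ)
  have ht0 : 0 ≤ t := by positivity
  have ht1 : t < 1 := (div_lt_one (by positivity)).2 (by linarith)
  have hbound : t / (ρ - δ) ≤ δ / (ε * (ρ - δ)) := by
    rw [div_div]
    gcongr
    linarith
  rw [← EReal.sub_le_iff_le_add (.inl (EReal.coe_ne_bot _)) (.inl (EReal.coe_ne_top _))]
  refine le_iInf₂ fun p hp => EReal.sub_le_of_le_add ?_
  have hmix : (fun i => (1 - t) * p i + t * a i) ∈ nbhd a ε := by
    refine mix_mem_nbhd hp.1 ha ht0 ht1.le ?_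
    calc (1 - t) * dTV p a ≤ (1 - t) * (ε + δ) := by
          gcongr
          linarith [dTV_triangle p b a, (hp.2 : dTV p b ≤ ε), dTV_comm a b]
      _ = ε := by simp only [t]; field_simp; ring
  have hlow : ∀ i, q i ≠ 0 → ρ - δ ≤ p i := fun i hi => by
    linarith [sub_le_of_mem_nbhd hb hp i, sub_le_dTV hb ha i, dTV_comm a b, hsupp i hi]
  calc worstCase ε a q ≤ obj q (fun i => (1 - t) * p i + t * a i) := iInf₂_le _ hmix
    _ ≤ obj q p + (t / (ρ - δ) : ℝ) := obj_mix_le hq ha ht0 ht1 (by linarith) hlow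
    _ ≤ obj q p + (δ / (ε * (ρ - δ)) : ℝ) := by gcongr

end transfer

lemma exists_Mbar_le_Mbar_add {ε : ℝ} (hε : 0 < ε) {κ η : ℝ} (hκ : 0 < κ) (hη : 0 < η) :
    ∃ δ > 0, ∀ a ∈ simplex d, ∀ b ∈ simplex d, ∀ i, ε + κ ≤ a i → dTV a b ≤ δ →
      Mbar ε a ≤ Mbar ε b + η := by
  obtain ⟨ρ, hρ, hnear⟩ := exists_supported_near_optimal hε.le hκ (half_pos hη)
  set δ := min (ρ / 2) (ε * ρ * η / 4)
  refine ⟨δ, by positivity, fun a ha b hb i hai hab => ?_⟩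
  obtain ⟨q, hq, hsupp, hMa⟩ := hnear a ha i hai
  have hδρ : δ ≤ ρ / 2 := min_le_left _ _
  have herr : δ / (ε * (ρ - δ)) ≤ η / 2 := by
    rw [div_le_iff₀ (by nlinarith)]
    nlinarith [min_le_right (ρ / 2) (ε * ρ * η / 4),
      mul_le_mul_of_nonneg_left (show ρ / 2 ≤ ρ - δ by linarith) (by positivity : 0 ≤ η / 2 * ε)]
  calc Mbar ε a ≤ worstCase ε a q + (η / 2 : ℝ) := hMa
    _ ≤ worstCase ε b q + (δ / (ε * (ρ - δ)) : ℝ) + (η / 2 : ℝ) := by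
        gcongr
        exact worstCase_le_worstCase_add hε ha hb hq (by linarith) hab hsupp
    _ ≤ Mbar ε b + (η / 2 : ℝ) + (η / 2 : ℝ) := by
        gcongr
        exact worstCase_le_Mbar hq
    _ = Mbar ε b + η := by rw [add_assoc, ← EReal.coe_add, add_halves]

lemma continuousWithinAt_toReal_Mbar {ε : ℝ} (hε : 0 < ε) {a : Fin d → ℝ}
    (ha : a ∈ {c : Fin d → ℝ | c ∈ simplex d ∧ ∃ i, ε < c i}) :
    ContinuousWithinAt (fun c => (Mbar ε c).toReal)
      {c : Fin d → ℝ | c ∈ simplex d ∧ ∃ i, ε < c i} a := by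
  obtain ⟨has, i, hai⟩ := ha
  set κ := (a i - ε) / 2
  have hκ : 0 < κ := by simp only [κ]; linarith
  have hai' : a i = ε + 2 * κ := by simp only [κ]; ring
  rw [ContinuousWithinAt, Metric.tendsto_nhds]
  intro η hη
  obtain ⟨δ, hδ, hcomp⟩ := exists_Mbar_le_Mbar_add (d := d) hε hκ (half_pos hη)
  have hclose : ∀ᶠ b in nhds a, dTV b a < min δ κ :=
    ((continuous_dTV_left a).tendsto' a 0 (dTV_self a)).eventually
      (gt_mem_nhds (lt_min hδ hκ))
  filter_upwards [self_mem_nhdsWithin, nhdsWithin_le_nhds hclose] with b ⟨hbs, j, hbj⟩ hba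
  have hba' : dTV a b ≤ δ := by linarith [dTV_comm a b, min_le_left δ κ]
  have hbi : ε + κ ≤ b i := by linarith [sub_le_dTV hbs has i, min_le_right δ κ]
  have hab := hcomp a has b hbs i (by linarith) hba'
  have hba := hcomp b hbs a has i hbi (by rwa [dTV_comm])
  rw [Mbar_eq_coe_toReal hε.le has hai, Mbar_eq_coe_toReal hε.le hbs hbj, ← EReal.coe_add,
    EReal.coe_le_coe_iff] at hab hba
  rw [Real.dist_eq, abs_sub_lt_iff]
  constructor <;> linarith

/-- on `D = {p̂ ∈ Δ(V) : ε < max_i p̂_i}`, the game value `M̄` is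
real-valued and continuous. -/
theorem stmt17 {d : ℕ} (ε : ℝ) (hε : 0 < ε) :
    (∀ phat ∈ {phat : Fin d → ℝ | phat ∈ simplex d ∧ ∃ i, ε < phat i},
        ∃ r : ℝ, Mbar ε phat = (r : EReal))
    ∧ ContinuousOn (Mbar (d := d) ε)
        {phat : Fin d → ℝ | phat ∈ simplex d ∧ ∃ i, ε < phat i} := by
  refine ⟨fun c ⟨hc, i, hi⟩ => ⟨_, Mbar_eq_coe_toReal hε.le hc hi⟩, ?_⟩
  have hreal : ContinuousOn (fun c => (Mbar ε c).toReal)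
      {c : Fin d → ℝ | c ∈ simplex d ∧ ∃ i, ε < c i} :=
    fun a ha => continuousWithinAt_toReal_Mbar hε ha
  refine (continuous_coe_real_ereal.comp_continuousOn hreal).congr fun c ⟨hc, i, hi⟩ => ?_
  exact Mbar_eq_coe_toReal hε.le hc hi
end
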